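/- arXiv:1804.11303 — 3 statements merged into one kernel-verified Lean document; each statement's English description precedes it below -/
import Mathlib

section
/- If a linear operator W on a complex inner product space commutes with an antilinear map C satisfying C∘C = -id and preserving the norm, then for any eigenvector v of W with real eigenvalue λ, the vector C(v) is also an eigenvector with eigenvalue λ, and C(v) is orthogonal to v; hence the eigenspace has dimension at least 2. -/
open scoped InnerProductSpace

/-- If a linear operator `W` commutes with an antilinear map `C` with `C ∘ C = -id`
preserving the inner product up to conjugation, then for any eigenvector `v` of `W`
with real eigenvalue `λ`, `C v` is again an eigenvector with eigenvalue `λ`,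
`C v` is orthogonal to `v`, and the eigenspace has dimension at least 2. -/
theorem charge_conjugation_even_multiplicity
    {V : Type*} [NormedAddCommGroup V] [InnerProductSpace ℂ V]
    (W : V →ₗ[ℂ] V) (C : V → V)
    (hCadd : ∀ v w : V, C (v + w) = C v + C w)
    (hCsmul : ∀ (a : ℂ) (v : V), C (a • v) = (starRingEnd ℂ) a • C v)
    (hCC : ∀ v : V, C (C v) = -v)
    (hCinner : ∀ v w : V, ⟪C v, C w⟫_ℂ = (starRingEnd ℂ) ⟪v, w⟫_ℂ)
    (hWC : ∀ v : V, W (C v) = C (W v))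
    (lam : ℝ) (v : V) (hv : v ≠ 0) (hWv : W v = (lam : ℂ) • v) :
    W (C v) = (lam : ℂ) • C v ∧ ⟪C v, v⟫_ℂ = 0 ∧
      2 ≤ Module.rank ℂ (Module.End.eigenspace W (lam : ℂ)) := by
  have hC0 : C (0 : V) = 0 := by simpa using hCsmul 0 0
  have hCv0 : C v ≠ 0 := fun h => hv (by
    have := hCC v; rw [h, hC0] at this; simpa using this.symm)
  have heig : W (C v) = (lam : ℂ) • C v := by
    rw [hWC, hWv, hCsmul, Complex.conj_ofReal]
  have horth : ⟪C v, v⟫_ℂ = 0 := by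
    have key := hCinner v (C v)
    rw [hCC, inner_neg_right, inner_conj_symm] at key
    have : (2 : ℂ) * ⟪C v, v⟫_ℂ = 0 := by linear_combination -key
    simpa using this
  refine ⟨heig, horth, ?_⟩
  set p := Module.End.eigenspace W (lam : ℂ)
  have hvp : v ∈ p := by rw [Module.End.mem_eigenspace_iff]; exact hWv
  have hCvp : C v ∈ p := by rw [Module.End.mem_eigenspace_iff]; exact heig
  have li : LinearIndependent ℂ ![(⟨v, hvp⟩ : p), ⟨C v, hCvp⟩] := by
    rw [LinearIndependent.pair_iff]
    intro s t hst
    have hst' : s • v + t • C v = 0 := by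
      have := congrArg (Subtype.val) hst
      simpa using this
    have h1 : ⟪C v, s • v + t • C v⟫_ℂ = 0 := by rw [hst']; simp
    rw [inner_add_right, inner_smul_right, inner_smul_right, horth,
      hCinner, inner_conj_symm] at h1
    have hvv : ⟪v, v⟫_ℂ ≠ 0 := fun h => hv (inner_self_eq_zero.mp h)
    have ht : t = 0 := by
      have : t * ⟪v, v⟫_ℂ = 0 := by linear_combination h1
      exact (mul_eq_zero.mp this).resolve_right hvv
    refine ⟨?_, ht⟩
    rw [ht] at hst'
    simp at hst'
    rcases hst' with h | h
    · exact h
    · exact absurd h hv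
  have := li.cardinal_lift_le_rank
  simpa using this
end

section
/- Let h : ℝ → ℝ be continuous and 2π-periodic, and let v(x) = (1/(2√π))(1,1)ᵀ e^{ix}. Then the first-order perturbation coefficient λ⁺⁽¹⁾ := ⟨W⁽¹⁾v, v⟩, where W⁽¹⁾ is the formally self-adjoint operator (i/4)[M h₁ d/dx + d/dx (M h₁ ·)] with M = [[h₃¹, h₁¹ - i h₂¹],[h₁¹ + i h₂¹, -h₃¹]] built from functions h_j¹(x), equals -(1/(4π))∫₀^{2π} h₁¹(x) dx = -(1/2) ĥ₁₁(0). -/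
open Complex

noncomputable def Mmul (h1 h2 h3 : ℝ → ℝ) (x : ℝ) (v : ℂ × ℂ) : ℂ × ℂ :=
  ((h3 x : ℂ) * v.1 + ((h1 x : ℂ) - I * (h2 x : ℂ)) * v.2,
   ((h1 x : ℂ) + I * (h2 x : ℂ)) * v.1 - (h3 x : ℂ) * v.2)

noncomputable def Wone (h1 h2 h3 : ℝ → ℝ) (v : ℝ → ℂ × ℂ) (x : ℝ) : ℂ × ℂ :=
  (I / 4) • Mmul h1 h2 h3 x (deriv (fun t => (v t).1) x, deriv (fun t => (v t).2) x) +
  (I / 4) • deriv (fun t => Mmul h1 h2 h3 t (v t)) x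

/-- λ⁺⁽¹⁾ = ⟨W⁽¹⁾ v, v⟩ = -(1/(4π))∫₀^{2π} h₁(x) dx = -(1/2) ĥ₁₁(0), where
v(x) = (1/(2√π))(1,1)ᵀ e^{ix}. -/
theorem lambda_one_plus (h1 h2 h3 : ℝ → ℝ)
    (hsm1 : ContDiff ℝ (⊤ : ℕ∞) h1) (hsm2 : ContDiff ℝ (⊤ : ℕ∞) h2) (hsm3 : ContDiff ℝ (⊤ : ℕ∞) h3)
    (hp1 : Function.Periodic h1 (2 * Real.pi)) (hp2 : Function.Periodic h2 (2 * Real.pi))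
    (hp3 : Function.Periodic h3 (2 * Real.pi))
    (v : ℝ → ℂ × ℂ)
    (hv : v = fun (x : ℝ) => ((1 / (2 * Real.sqrt Real.pi) : ℝ) : ℂ) •
      (Complex.exp (I * (x : ℂ)), Complex.exp (I * (x : ℂ)))) :
    (∫ x in (0:ℝ)..(2 * Real.pi),
        ((starRingEnd ℂ) (v x).1 * (Wone h1 h2 h3 v x).1 +
         (starRingEnd ℂ) (v x).2 * (Wone h1 h2 h3 v x).2)) =
      -((1 / (4 * Real.pi) : ℝ) : ℂ) * ((∫ x in (0:ℝ)..(2 * Real.pi), h1 x : ℝ) : ℂ) ∧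
    (∫ x in (0:ℝ)..(2 * Real.pi),
        ((starRingEnd ℂ) (v x).1 * (Wone h1 h2 h3 v x).1 +
         (starRingEnd ℂ) (v x).2 * (Wone h1 h2 h3 v x).2)) =
      -(1 / 2 : ℂ) * (((1 / (2 * Real.pi) : ℝ) : ℂ) *
        ((∫ x in (0:ℝ)..(2 * Real.pi), h1 x : ℝ) : ℂ)) := by
  have hd1 : Differentiable ℝ h1 := hsm1.differentiable (by simp)
  have hd2 : Differentiable ℝ h2 := hsm2.differentiable (by simp)
  have hd3 : Differentiable ℝ h3 := hsm3.differentiable (by simp)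
  set c : ℂ := ((1 / (2 * Real.sqrt Real.pi) : ℝ) : ℂ) with hc_def
  have hc : c * c = ((1 / (4 * Real.pi) : ℝ) : ℂ) := by
    rw [hc_def, ← Complex.ofReal_mul]
    congr 1
    rw [div_mul_div_comm, one_mul]
    congr 1
    rw [mul_mul_mul_comm, Real.mul_self_sqrt Real.pi_pos.le]
    ring
  have key : ∀ x : ℝ,
      (starRingEnd ℂ) (v x).1 * (Wone h1 h2 h3 v x).1 +
      (starRingEnd ℂ) (v x).2 * (Wone h1 h2 h3 v x).2
      = ((1 / (4 * Real.pi) : ℝ) : ℂ) * (I / 2 * ((deriv h1 x : ℝ) : ℂ) - (h1 x : ℂ)) := by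
    intro x
    have hexp : HasDerivAt (fun t : ℝ => Complex.exp (I * t))
        (I * Complex.exp (I * x)) x := by
      have h1' : HasDerivAt (fun z : ℂ => Complex.exp (I * z))
          (Complex.exp (I * x) * I) (x : ℂ) := by
        have h0 := (Complex.hasDerivAt_exp (I * x)).comp (x : ℂ)
          ((hasDerivAt_id (x : ℂ)).const_mul I)
        simp only [mul_one] at h0
        exact h0
      simpa [mul_comm] using h1'.comp_ofReal
    have hv1 : HasDerivAt (fun t => (v t).1) (c * (I * Complex.exp (I * x))) x := by
      rw [hv]; simpa [smul_eq_mul] using hexp.const_mul c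
    have hv2 : HasDerivAt (fun t => (v t).2) (c * (I * Complex.exp (I * x))) x := by
      rw [hv]; simpa [smul_eq_mul] using hexp.const_mul c
    have hh1 : HasDerivAt (fun t : ℝ => ((h1 t : ℝ) : ℂ)) ((deriv h1 x : ℝ) : ℂ) x :=
      (hd1 x).hasDerivAt.ofReal_comp
    have hh2 : HasDerivAt (fun t : ℝ => ((h2 t : ℝ) : ℂ)) ((deriv h2 x : ℝ) : ℂ) x :=
      (hd2 x).hasDerivAt.ofReal_comp
    have hh3 : HasDerivAt (fun t : ℝ => ((h3 t : ℝ) : ℂ)) ((deriv h3 x : ℝ) : ℂ) x :=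
      (hd3 x).hasDerivAt.ofReal_comp
    set E := Complex.exp (I * x) with hE
    set d1 := ((deriv h1 x : ℝ) : ℂ)
    set d2 := ((deriv h2 x : ℝ) : ℂ)
    set d3 := ((deriv h3 x : ℝ) : ℂ)
    -- derivative of the pair-valued function
    have hM : HasDerivAt (fun t => Mmul h1 h2 h3 t (v t))
        ((d3 * (c * E) + (h3 x : ℂ) * (c * (I * E))
          + ((d1 - I * d2) * (c * E) + ((h1 x : ℂ) - I * (h2 x : ℂ)) * (c * (I * E))),
         ((d1 + I * d2) * (c * E) + ((h1 x : ℂ) + I * (h2 x : ℂ)) * (c * (I * E))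
          - (d3 * (c * E) + (h3 x : ℂ) * (c * (I * E)))))) x := by
      have hfst : HasDerivAt (fun t => ((h3 t : ℂ) * (v t).1
          + ((h1 t : ℂ) - I * (h2 t : ℂ)) * (v t).2))
          (d3 * (c * E) + (h3 x : ℂ) * (c * (I * E))
            + ((d1 - I * d2) * (c * E) + ((h1 x : ℂ) - I * (h2 x : ℂ)) * (c * (I * E)))) x := by
        have e1 : (v x).1 = c * E := by rw [hv]; simp [smul_eq_mul, hE]
        have e2 : (v x).2 = c * E := by rw [hv]; simp [smul_eq_mul, hE]
        have := (hh3.mul (hv1)).add ((hh1.sub ((hh2.const_mul I))).mul hv2)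
        rw [e1, e2] at this
        exact this
      have hsnd : HasDerivAt (fun t => (((h1 t : ℂ) + I * (h2 t : ℂ)) * (v t).1
          - (h3 t : ℂ) * (v t).2))
          ((d1 + I * d2) * (c * E) + ((h1 x : ℂ) + I * (h2 x : ℂ)) * (c * (I * E))
            - (d3 * (c * E) + (h3 x : ℂ) * (c * (I * E)))) x := by
        have e1 : (v x).1 = c * E := by rw [hv]; simp [smul_eq_mul, hE]
        have e2 : (v x).2 = c * E := by rw [hv]; simp [smul_eq_mul, hE]
        have := ((hh1.add (hh2.const_mul I)).mul hv1).sub (hh3.mul hv2)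
        rw [e1, e2] at this
        exact this
      exact hfst.prodMk hsnd
    have he : Complex.exp (-(I * x)) * E = 1 := by
      rw [hE, ← Complex.exp_add]; simp
    have hconjE : (starRingEnd ℂ) E = Complex.exp (-(I * x)) := by
      rw [hE, ← Complex.exp_conj]
      congr 1
      simp [Complex.conj_ofReal]
    have hconjc : (starRingEnd ℂ) c = c := by rw [hc_def]; exact Complex.conj_ofReal _
    have e1 : (v x).1 = c * E := by rw [hv]; simp [smul_eq_mul, hE]
    have e2 : (v x).2 = c * E := by rw [hv]; simp [smul_eq_mul, hE]
    rw [Wone, hM.deriv, hv1.deriv, hv2.deriv, e1, e2]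
    simp only [Mmul, Prod.smul_fst, Prod.smul_snd, Prod.fst_add, Prod.snd_add,
      smul_eq_mul, map_mul, hconjE, hconjc]
    set F := Complex.exp (-(I * x))
    linear_combination ((I / 2 * d1 - (h1 x : ℂ)) ) * hc +
      (c * c * (I / 2 * d1 - (h1 x : ℂ))) * he +
      (c * c * F * E * (h1 x : ℂ)) * Complex.I_sq
  rw [intervalIntegral.integral_congr (g := fun x =>
      ((1 / (4 * Real.pi) : ℝ) : ℂ) * (I / 2 * ((deriv h1 x : ℝ) : ℂ) - (h1 x : ℂ)))
      (fun x _ => key x)]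
  have hint1 : IntervalIntegrable (fun x => ((deriv h1 x : ℝ) : ℂ)) MeasureTheory.volume 0 (2 * Real.pi) := by
    exact (Complex.continuous_ofReal.comp (hsm1.continuous_deriv (by simp))).intervalIntegrable _ _
  have hint2 : IntervalIntegrable (fun x => ((h1 x : ℝ) : ℂ)) MeasureTheory.volume 0 (2 * Real.pi) := by
    exact (Complex.continuous_ofReal.comp hsm1.continuous).intervalIntegrable _ _
  have hderint : (∫ x in (0:ℝ)..(2 * Real.pi), deriv h1 x) = 0 := by
    rw [intervalIntegral.integral_deriv_eq_sub (fun x _ => hd1 x)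
      ((hsm1.continuous_deriv (by simp)).intervalIntegrable _ _)]
    have : h1 (2 * Real.pi) = h1 0 := by simpa using hp1 0
    rw [this]; ring
  have hsplit : (∫ x in (0:ℝ)..(2 * Real.pi),
      ((1 / (4 * Real.pi) : ℝ) : ℂ) * (I / 2 * ((deriv h1 x : ℝ) : ℂ) - (h1 x : ℂ)))
      = -((1 / (4 * Real.pi) : ℝ) : ℂ) * ((∫ x in (0:ℝ)..(2 * Real.pi), h1 x : ℝ) : ℂ) := by
    rw [intervalIntegral.integral_const_mul,
      intervalIntegral.integral_sub ((hint1.const_mul (I / 2) : _)) hint2]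
    rw [intervalIntegral.integral_const_mul]
    rw [intervalIntegral.integral_ofReal, intervalIntegral.integral_ofReal, hderint]
    push_cast
    ring
  constructor
  · exact hsplit
  · rw [hsplit]
    have h4 : ((1 / (4 * Real.pi) : ℝ) : ℂ) = (1 / 2 : ℂ) * ((1 / (2 * Real.pi) : ℝ) : ℂ) := by
      have hpi : (Real.pi : ℂ) ≠ 0 := Complex.ofReal_ne_zero.mpr Real.pi_ne_zero
      push_cast
      field_simp
      ring
    rw [h4]
    ring
end

section
/- With the same setup, for the eigenvector v₋(x) = (1/(2√π))(1,1)ᵀ e^{-ix} corresponding to eigenvalue -1, one has ⟨W⁽¹⁾ v₋, v₋⟩ = +(1/2) ĥ₁₁(0). In particular λ⁺⁽¹⁾ + λ₋⁽¹⁾ = 0, so spectral asymmetry cannot occur at first order in ε. -/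
open Complex

/-- The L² pairing ⟨W⁽¹⁾ u, u⟩ = ∫₀^{2π} u* (W⁽¹⁾ u) dx. -/
noncomputable def pairing (h1 h2 h3 : ℝ → ℝ) (u : ℝ → ℂ × ℂ) : ℂ :=
  ∫ x in (0:ℝ)..(2 * Real.pi),
    ((starRingEnd ℂ) (u x).1 * (Wone h1 h2 h3 u x).1 +
     (starRingEnd ℂ) (u x).2 * (Wone h1 h2 h3 u x).2)

set_option maxHeartbeats 1000000 in
lemma key (h1 h2 h3 : ℝ → ℝ)
    (hsm1 : ContDiff ℝ (⊤ : ℕ∞) h1) (hsm2 : ContDiff ℝ (⊤ : ℕ∞) h2) (hsm3 : ContDiff ℝ (⊤ : ℕ∞) h3)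
    (hp1 : Function.Periodic h1 (2 * Real.pi)) (s : ℝ) :
    pairing h1 h2 h3 (fun x => ((1 / (2 * Real.sqrt Real.pi) : ℝ) : ℂ) •
      (Complex.exp ((s : ℂ) * I * x), Complex.exp ((s : ℂ) * I * x))) =
    (((-s) * (1 / (4 * Real.pi)) : ℝ) : ℂ) *
      ((∫ x in (0:ℝ)..(2 * Real.pi), h1 x : ℝ) : ℂ) := by
  have hd1 : Differentiable ℝ h1 := hsm1.differentiable (by simp)
  have hd2 : Differentiable ℝ h2 := hsm2.differentiable (by simp)
  have hd3 : Differentiable ℝ h3 := hsm3.differentiable (by simp)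
  have hc1' : Continuous (deriv h1) := hsm1.continuous_deriv (by simp)
  set c : ℝ := 1 / (2 * Real.sqrt Real.pi) with hc
  set ω : ℂ := (s : ℂ) * I with hω
  set E : ℝ → ℂ := fun x => Complex.exp (ω * x) with hEdef
  set u : ℝ → ℂ × ℂ := fun x => ((c : ℝ) : ℂ) • (E x, E x) with hu
  -- pointwise identity for the integrand
  have hpt : ∀ x : ℝ,
      (starRingEnd ℂ) (u x).1 * (Wone h1 h2 h3 u x).1 +
      (starRingEnd ℂ) (u x).2 * (Wone h1 h2 h3 u x).2 =
      ((c^2 * (-s) * h1 x : ℝ) : ℂ) + (I/2) * ((c^2 * deriv h1 x : ℝ) : ℂ) := by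
    intro x
    have hE : HasDerivAt E (ω * E x) x := by
      have h0 : HasDerivAt (fun t : ℝ => ω * (t : ℂ)) ω x := by
        simpa using (ofRealCLM.hasDerivAt (x := x)).const_mul ω
      simpa [hEdef, mul_comm] using h0.cexp
    have h1C : HasDerivAt (fun t : ℝ => (h1 t : ℂ)) ((deriv h1 x : ℝ) : ℂ) x :=
      ((hd1 x).hasDerivAt).ofReal_comp
    have h2C : HasDerivAt (fun t : ℝ => (h2 t : ℂ)) ((deriv h2 x : ℝ) : ℂ) x :=
      ((hd2 x).hasDerivAt).ofReal_comp
    have h3C : HasDerivAt (fun t : ℝ => (h3 t : ℂ)) ((deriv h3 x : ℝ) : ℂ) x :=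
      ((hd3 x).hasDerivAt).ofReal_comp
    have hcE : HasDerivAt (fun t => ((c:ℝ):ℂ) * E t) (((c:ℝ):ℂ) * (ω * E x)) x :=
      hE.const_mul _
    have hfst : deriv (fun t => (u t).1) x = ((c:ℝ):ℂ) * (ω * E x) := by
      have : (fun t => (u t).1) = fun t => ((c:ℝ):ℂ) * E t := by
        funext t; simp [hu, smul_eq_mul]
      rw [this]; exact hcE.deriv
    have hsnd : deriv (fun t => (u t).2) x = ((c:ℝ):ℂ) * (ω * E x) := by
      have : (fun t => (u t).2) = fun t => ((c:ℝ):ℂ) * E t := by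
        funext t; simp [hu, smul_eq_mul]
      rw [this]; exact hcE.deriv
    -- derivative of the M·u map
    have hA : HasDerivAt (fun t => (h3 t : ℂ) * (((c:ℝ):ℂ) * E t) +
        ((h1 t : ℂ) - I * (h2 t : ℂ)) * (((c:ℝ):ℂ) * E t))
        ((((deriv h3 x :ℝ): ℂ)) * (((c:ℝ):ℂ) * E x) + (h3 x : ℂ) * (((c:ℝ):ℂ) * (ω * E x)) +
         ((((deriv h1 x :ℝ): ℂ) - I * ((deriv h2 x :ℝ): ℂ)) * (((c:ℝ):ℂ) * E x) +
          ((h1 x : ℂ) - I * (h2 x : ℂ)) * (((c:ℝ):ℂ) * (ω * E x)))) x :=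
      (h3C.mul hcE).add ((h1C.sub (h2C.const_mul I)).mul hcE)
    have hB : HasDerivAt (fun t => ((h1 t : ℂ) + I * (h2 t : ℂ)) * (((c:ℝ):ℂ) * E t) -
        (h3 t : ℂ) * (((c:ℝ):ℂ) * E t))
        (((((deriv h1 x :ℝ): ℂ) + I * ((deriv h2 x :ℝ): ℂ)) * (((c:ℝ):ℂ) * E x) +
          ((h1 x : ℂ) + I * (h2 x : ℂ)) * (((c:ℝ):ℂ) * (ω * E x))) -
         (((deriv h3 x :ℝ): ℂ) * (((c:ℝ):ℂ) * E x) + (h3 x : ℂ) * (((c:ℝ):ℂ) * (ω * E x)))) x :=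
      ((h1C.add (h2C.const_mul I)).mul hcE).sub (h3C.mul hcE)
    have hMeq : (fun t => Mmul h1 h2 h3 t (u t)) =
        fun t => ((h3 t : ℂ) * (((c:ℝ):ℂ) * E t) +
          ((h1 t : ℂ) - I * (h2 t : ℂ)) * (((c:ℝ):ℂ) * E t),
          ((h1 t : ℂ) + I * (h2 t : ℂ)) * (((c:ℝ):ℂ) * E t) -
          (h3 t : ℂ) * (((c:ℝ):ℂ) * E t)) := by
      funext t; simp [Mmul, hu, smul_eq_mul]
    have hMderiv := (HasDerivAt.prodMk hA hB).deriv
    rw [← hMeq] at hMderiv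
    have hconj : (starRingEnd ℂ) (E x) * E x = 1 := by
      rw [hEdef]
      rw [← Complex.exp_conj, ← Complex.exp_add]
      have : (starRingEnd ℂ) (ω * x) = -(ω * x) := by
        simp [hω]
      rw [this]; simp
    simp only [Wone]
    rw [hfst, hsnd, hMderiv]
    simp only [Mmul, hu, Prod.smul_mk, Prod.fst_add,
      Prod.snd_add, Prod.smul_fst, Prod.smul_snd, smul_eq_mul, Prod.mk.injEq]
    have hcc : (starRingEnd ℂ) (((c:ℝ):ℂ)) = ((c:ℝ):ℂ) := Complex.conj_ofReal c
    simp only [map_mul, hcc]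
    push_cast
    linear_combination (((c:ℝ):ℂ)^2 * (-(s:ℂ) * (h1 x : ℂ)) +
      (I/2) * (((c:ℝ):ℂ)^2 * ((deriv h1 x : ℝ) : ℂ))) * hconj +
      (((c:ℝ):ℂ)^2 * (starRingEnd ℂ) (E x) * (s:ℂ) * E x * ((h1 x : ℝ):ℂ)) * Complex.I_sq
  -- now the integral
  unfold pairing
  rw [intervalIntegral.integral_congr (fun x _ => hpt x)]
  have hi1 : IntervalIntegrable (fun x => ((c^2 * (-s) * h1 x : ℝ) : ℂ)) MeasureTheory.volume 0 (2*Real.pi) := by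
    apply Continuous.intervalIntegrable
    exact Complex.continuous_ofReal.comp (continuous_const.mul hsm1.continuous)
  have hi2 : IntervalIntegrable (fun x => (I/2) * ((c^2 * deriv h1 x : ℝ) : ℂ)) MeasureTheory.volume 0 (2*Real.pi) := by
    apply Continuous.intervalIntegrable
    exact continuous_const.mul (Complex.continuous_ofReal.comp (continuous_const.mul hc1'))
  rw [intervalIntegral.integral_add hi1 hi2]
  have e1 : (∫ x in (0:ℝ)..(2*Real.pi), ((c^2 * (-s) * h1 x : ℝ) : ℂ)) =
      ((c^2 * (-s) : ℝ) : ℂ) * ((∫ x in (0:ℝ)..(2*Real.pi), h1 x : ℝ) : ℂ) := by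
    rw [intervalIntegral.integral_ofReal (f := fun x => c^2 * (-s) * h1 x)]
    rw [show (fun x => c^2 * (-s) * h1 x) = fun x => (c^2 * (-s)) * h1 x from rfl]
    rw [intervalIntegral.integral_const_mul]
    push_cast; ring
  have e2 : (∫ x in (0:ℝ)..(2*Real.pi), (I/2) * ((c^2 * deriv h1 x : ℝ) : ℂ)) = 0 := by
    rw [intervalIntegral.integral_const_mul]
    rw [intervalIntegral.integral_ofReal (f := fun x => c^2 * deriv h1 x)]
    rw [intervalIntegral.integral_const_mul]
    have : (∫ x in (0:ℝ)..(2*Real.pi), deriv h1 x) = h1 (2*Real.pi) - h1 0 := by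
      apply intervalIntegral.integral_deriv_eq_sub (fun x _ => hd1 x)
      exact hc1'.intervalIntegrable 0 (2*Real.pi)
    rw [this]
    have : h1 (2*Real.pi) = h1 0 := by simpa using hp1 0
    rw [this]; simp
  rw [e1, e2, add_zero]
  have hcsq : c^2 = 1 / (4 * Real.pi) := by
    rw [hc]
    rw [div_pow, mul_pow, Real.sq_sqrt Real.pi_pos.le]
    norm_num
  rw [hcsq]
  push_cast
  ring


/-- For the eigenvector v₋(x) = (1/(2√π))(1,1)ᵀ e^{-ix} one has
⟨W⁽¹⁾ v₋, v₋⟩ = +(1/2) ĥ₁₁(0); in particular λ⁺⁽¹⁾ + λ₋⁽¹⁾ = 0. -/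
theorem lambda_one_minus (h1 h2 h3 : ℝ → ℝ)
    (hsm1 : ContDiff ℝ (⊤ : ℕ∞) h1) (hsm2 : ContDiff ℝ (⊤ : ℕ∞) h2) (hsm3 : ContDiff ℝ (⊤ : ℕ∞) h3)
    (hp1 : Function.Periodic h1 (2 * Real.pi)) (hp2 : Function.Periodic h2 (2 * Real.pi))
    (hp3 : Function.Periodic h3 (2 * Real.pi))
    (vp vm : ℝ → ℂ × ℂ)
    (hvp : vp = fun (x : ℝ) => ((1 / (2 * Real.sqrt Real.pi) : ℝ) : ℂ) •
      (Complex.exp (I * (x : ℂ)), Complex.exp (I * (x : ℂ))))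
    (hvm : vm = fun (x : ℝ) => ((1 / (2 * Real.sqrt Real.pi) : ℝ) : ℂ) •
      (Complex.exp (-I * (x : ℂ)), Complex.exp (-I * (x : ℂ)))) :
    pairing h1 h2 h3 vm =
      (1 / 2 : ℂ) * (((1 / (2 * Real.pi) : ℝ) : ℂ) *
        ((∫ x in (0:ℝ)..(2 * Real.pi), h1 x : ℝ) : ℂ)) ∧
    pairing h1 h2 h3 vp + pairing h1 h2 h3 vm = 0 := by
  have kp := key h1 h2 h3 hsm1 hsm2 hsm3 hp1 1
  have km := key h1 h2 h3 hsm1 hsm2 hsm3 hp1 (-1)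
  have evp : pairing h1 h2 h3 vp =
      (((-(1:ℝ)) * (1 / (4 * Real.pi)) : ℝ) : ℂ) *
        ((∫ x in (0:ℝ)..(2 * Real.pi), h1 x : ℝ) : ℂ) := by
    have e : (fun (x : ℝ) => ((1 / (2 * Real.sqrt Real.pi) : ℝ) : ℂ) •
        (Complex.exp (I * (x : ℂ)), Complex.exp (I * (x : ℂ)))) =
        (fun (x : ℝ) => ((1 / (2 * Real.sqrt Real.pi) : ℝ) : ℂ) •
        (Complex.exp (((1:ℝ) : ℂ) * I * x), Complex.exp (((1:ℝ) : ℂ) * I * x))) := by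
      funext x; norm_num
    rw [hvp, e]; exact kp
  have evm : pairing h1 h2 h3 vm =
      (((-(-1:ℝ)) * (1 / (4 * Real.pi)) : ℝ) : ℂ) *
        ((∫ x in (0:ℝ)..(2 * Real.pi), h1 x : ℝ) : ℂ) := by
    have e : (fun (x : ℝ) => ((1 / (2 * Real.sqrt Real.pi) : ℝ) : ℂ) •
        (Complex.exp (-I * (x : ℂ)), Complex.exp (-I * (x : ℂ)))) =
        (fun (x : ℝ) => ((1 / (2 * Real.sqrt Real.pi) : ℝ) : ℂ) •
        (Complex.exp ((((-1:ℝ)) : ℂ) * I * x), Complex.exp ((((-1:ℝ)) : ℂ) * I * x))) := by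
      funext x; push_cast; ring_nf
    rw [hvm, e]; exact km
  constructor
  · rw [evm]; push_cast; ring
  · rw [evp, evm]; push_cast; ring
end
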